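/- Let Ω ⊆ ℂ² be a domain contained in (ℂ*)², let (p₁,p₂) ∈ Ω, and suppose the holomorphic function q(z₁,z₂) = z₁^k/z₂^l is bounded on Ω (k,l ∈ ℕ⁺). If a bounded holomorphic function f on Ω can be written as f = g₁·(q − q(p)) + g₂·(z₁^m z₂^n − p₁^m p₂^n) with g₁, g₂ ∈ H^∞(Ω) and m,n ∈ ℕ not both zero, then f can be written as f = f₁·(z₁ − p₁) + f₂·(z₂ − p₂) with f₁, f₂ ∈ H^∞(Ω). -/
import Mathlib


/-- On a bounded domain `Ω ⊆ (ℂ*)²` on which `q = z₁^k/z₂^l` is bounded,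
any bounded holomorphic `f` of the form `g₁·(q − q(p)) + g₂·(z₁^m z₂^n − p₁^m p₂^n)` with
`g₁, g₂ ∈ H^∞(Ω)` lies in the ideal generated by `z₁ − p₁` and `z₂ − p₂` in `H^∞(Ω)`. -/
theorem stmt10 (k l : ℕ) (hk : 0 < k) (hl : 0 < l) (m n : ℕ) (hmn : m ≠ 0 ∨ n ≠ 0)
    (Ω : Set (ℂ × ℂ)) (hopen : IsOpen Ω) (hconn : IsConnected Ω)
    (hbdd : Bornology.IsBounded Ω) (hax : ∀ z ∈ Ω, z.1 ≠ 0 ∧ z.2 ≠ 0)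
    (p : ℂ × ℂ) (hp : p ∈ Ω)
    (hq : ∃ C : ℝ, ∀ z ∈ Ω, ‖z.1 ^ k / z.2 ^ l‖ ≤ C)
    (f g₁ g₂ : ℂ × ℂ → ℂ)
    (hf : DifferentiableOn ℂ f Ω) (hfb : ∃ M : ℝ, ∀ z ∈ Ω, ‖f z‖ ≤ M)
    (hg₁ : DifferentiableOn ℂ g₁ Ω) (hg₁b : ∃ M : ℝ, ∀ z ∈ Ω, ‖g₁ z‖ ≤ M)
    (hg₂ : DifferentiableOn ℂ g₂ Ω) (hg₂b : ∃ M : ℝ, ∀ z ∈ Ω, ‖g₂ z‖ ≤ M)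
    (hdec : ∀ z ∈ Ω, f z =
      g₁ z * (z.1 ^ k / z.2 ^ l - p.1 ^ k / p.2 ^ l) +
        g₂ z * (z.1 ^ m * z.2 ^ n - p.1 ^ m * p.2 ^ n)) :
    ∃ f₁ f₂ : ℂ × ℂ → ℂ,
      DifferentiableOn ℂ f₁ Ω ∧ DifferentiableOn ℂ f₂ Ω ∧
      (∃ C : ℝ, ∀ z ∈ Ω, ‖f₁ z‖ ≤ C) ∧ (∃ C : ℝ, ∀ z ∈ Ω, ‖f₂ z‖ ≤ C) ∧
      ∀ z ∈ Ω, f z = f₁ z * (z.1 - p.1) + f₂ z * (z.2 - p.2) := by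
  obtain ⟨hp1, hp2⟩ := hax p hp
  obtain ⟨C, hC⟩ := hq
  obtain ⟨M₁, hM₁⟩ := hg₁b
  obtain ⟨M₂, hM₂⟩ := hg₂b
  -- abbreviations for the polynomial "geometric sum" factors
  set S1 : ℂ × ℂ → ℂ := fun z => (∑ i ∈ Finset.range k, z.1 ^ i * p.1 ^ (k - 1 - i)) / p.2 ^ l
    with hS1
  set S2 : ℂ × ℂ → ℂ := fun z => (∑ i ∈ Finset.range l, z.2 ^ i * p.2 ^ (l - 1 - i)) / p.2 ^ l
    with hS2
  set S3 : ℂ × ℂ → ℂ := fun z => z.2 ^ n * ∑ i ∈ Finset.range m, z.1 ^ i * p.1 ^ (m - 1 - i)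
    with hS3
  set S4 : ℂ × ℂ → ℂ := fun z => p.1 ^ m * ∑ i ∈ Finset.range n, z.2 ^ i * p.2 ^ (n - 1 - i)
    with hS4
  -- the polynomial sums are entire
  have hd1 : ∀ (N : ℕ) (w : ℂ), Differentiable ℂ
      (fun z : ℂ × ℂ => ∑ i ∈ Finset.range N, z.1 ^ i * w ^ (N - 1 - i)) :=
    fun N w => Differentiable.fun_sum fun i _ => (differentiable_fst.pow i).mul_const _
  have hd2 : ∀ (N : ℕ) (w : ℂ), Differentiable ℂ
      (fun z : ℂ × ℂ => ∑ i ∈ Finset.range N, z.2 ^ i * w ^ (N - 1 - i)) :=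
    fun N w => Differentiable.fun_sum fun i _ => (differentiable_snd.pow i).mul_const _
  have hdS1 : Differentiable ℂ S1 := by
    rw [hS1]
    simp only [div_eq_mul_inv]
    exact (hd1 k p.1).mul_const _
  have hdS2 : Differentiable ℂ S2 := by
    rw [hS2]
    simp only [div_eq_mul_inv]
    exact (hd2 l p.2).mul_const _
  have hdS3 : Differentiable ℂ S3 := by
    rw [hS3]; exact (differentiable_snd.pow n).mul (hd1 m p.1)
  have hdS4 : Differentiable ℂ S4 := by
    rw [hS4]; exact (differentiable_const _).mul (hd2 n p.2)
  -- bounds for continuous functions on Ω, via compactness of the closure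
  have hcl : IsCompact (closure Ω) := hbdd.isCompact_closure
  have hbnd : ∀ φ : ℂ × ℂ → ℂ, Continuous φ → ∃ B : ℝ, ∀ z ∈ Ω, ‖φ z‖ ≤ B := by
    intro φ hφ
    obtain ⟨B, hB⟩ := hcl.exists_bound_of_continuousOn hφ.continuousOn
    exact ⟨B, fun z hz => hB z (subset_closure hz)⟩
  obtain ⟨B1, hB1⟩ := hbnd S1 hdS1.continuous
  obtain ⟨B2, hB2⟩ := hbnd S2 hdS2.continuous
  obtain ⟨B3, hB3⟩ := hbnd S3 hdS3.continuous
  obtain ⟨B4, hB4⟩ := hbnd S4 hdS4.continuous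
  -- the two functions
  refine ⟨fun z => g₁ z * S1 z + g₂ z * S3 z,
          fun z => g₁ z * (-(z.1 ^ k / z.2 ^ l) * S2 z) + g₂ z * S4 z, ?_, ?_, ?_, ?_, ?_⟩
  · -- differentiability of f₁
    exact (hg₁.mul hdS1.differentiableOn).add (hg₂.mul hdS3.differentiableOn)
  · -- differentiability of f₂
    have hqd : DifferentiableOn ℂ (fun z : ℂ × ℂ => z.1 ^ k / z.2 ^ l) Ω := by
      simp only [div_eq_mul_inv]
      exact (differentiable_fst.pow k).differentiableOn.mul
        ((differentiable_snd.pow l).differentiableOn.inv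
          fun z hz => pow_ne_zero l (hax z hz).2)
    exact (hg₁.mul (hqd.neg.mul hdS2.differentiableOn)).add (hg₂.mul hdS4.differentiableOn)
  · -- bound for f₁
    refine ⟨max M₁ 0 * max B1 0 + max M₂ 0 * max B3 0, fun z hz => ?_⟩
    calc ‖g₁ z * S1 z + g₂ z * S3 z‖ ≤ ‖g₁ z‖ * ‖S1 z‖ + ‖g₂ z‖ * ‖S3 z‖ := by
          refine (norm_add_le _ _).trans ?_
          simp [norm_mul]
      _ ≤ max M₁ 0 * max B1 0 + max M₂ 0 * max B3 0 := by
          refine add_le_add ?_ ?_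
          · exact mul_le_mul ((hM₁ z hz).trans (le_max_left _ _))
              ((hB1 z hz).trans (le_max_left _ _)) (norm_nonneg _) (le_max_right _ _)
          · exact mul_le_mul ((hM₂ z hz).trans (le_max_left _ _))
              ((hB3 z hz).trans (le_max_left _ _)) (norm_nonneg _) (le_max_right _ _)
  · -- bound for f₂
    refine ⟨max M₁ 0 * (max C 0 * max B2 0) + max M₂ 0 * max B4 0, fun z hz => ?_⟩
    calc ‖g₁ z * (-(z.1 ^ k / z.2 ^ l) * S2 z) + g₂ z * S4 z‖
        ≤ ‖g₁ z‖ * (‖z.1 ^ k / z.2 ^ l‖ * ‖S2 z‖) + ‖g₂ z‖ * ‖S4 z‖ := by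
          refine (norm_add_le _ _).trans ?_
          simp [norm_mul, mul_assoc]
      _ ≤ max M₁ 0 * (max C 0 * max B2 0) + max M₂ 0 * max B4 0 := by
          refine add_le_add ?_ ?_
          · refine mul_le_mul ((hM₁ z hz).trans (le_max_left _ _)) ?_ (by positivity)
              (le_max_right _ _)
            exact mul_le_mul ((hC z hz).trans (le_max_left _ _))
              ((hB2 z hz).trans (le_max_left _ _)) (norm_nonneg _) (le_max_right _ _)
          · exact mul_le_mul ((hM₂ z hz).trans (le_max_left _ _))
              ((hB4 z hz).trans (le_max_left _ _)) (norm_nonneg _) (le_max_right _ _)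
  · -- the decomposition
    intro z hz
    obtain ⟨hz1, hz2⟩ := hax z hz
    have hz2l : z.2 ^ l ≠ 0 := pow_ne_zero _ hz2
    have hp2l : p.2 ^ l ≠ 0 := pow_ne_zero _ hp2
    have h1 := geom_sum₂_mul z.1 p.1 k
    have h2 := geom_sum₂_mul z.2 p.2 l
    have h3 := geom_sum₂_mul z.1 p.1 m
    have h4 := geom_sum₂_mul z.2 p.2 n
    have e1 : S1 z * (z.1 - p.1) = (z.1 ^ k - p.1 ^ k) / p.2 ^ l := by
      rw [hS1]; simp only; rw [div_mul_eq_mul_div, h1]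
    have e2 : S2 z * (z.2 - p.2) = (z.2 ^ l - p.2 ^ l) / p.2 ^ l := by
      rw [hS2]; simp only; rw [div_mul_eq_mul_div, h2]
    have e3 : S3 z * (z.1 - p.1) = z.2 ^ n * (z.1 ^ m - p.1 ^ m) := by
      rw [hS3]; simp only; rw [mul_assoc, h3]
    have e4 : S4 z * (z.2 - p.2) = p.1 ^ m * (z.2 ^ n - p.2 ^ n) := by
      rw [hS4]; simp only; rw [mul_assoc, h4]
    have key1 : z.1 ^ k / z.2 ^ l - p.1 ^ k / p.2 ^ l =
        S1 z * (z.1 - p.1) + (-(z.1 ^ k / z.2 ^ l) * S2 z) * (z.2 - p.2) := by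
      rw [e1, mul_assoc, e2]
      field_simp
      ring
    have key2 : z.1 ^ m * z.2 ^ n - p.1 ^ m * p.2 ^ n =
        S3 z * (z.1 - p.1) + S4 z * (z.2 - p.2) := by
      rw [e3, e4]; ring
    rw [hdec z hz, key1, key2]
    ring
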